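/- arXiv:2009.03634 — 3 statements merged into one kernel-verified Lean document; each statement's English description precedes it below -/
import Mathlib

section
/- Let m = 2. For every 1-lookahead equilibrium σ of the sequential scheduling game, the makespan of σ is at most 2·OPT (the sequential price of anarchy for two unrelated machines with 1-lookahead players is at most 2). -/
/-!
Sequential scheduling game on two unrelated machines, 1-lookahead players.
Machines are indexed by `Fin 2` (index `0` is machine 1, index `1` is machine 2),
jobs are `1, …, n`, and `p i j` is the processing time of job `j` on machine `i`.
-/

/-- `mload p σ i ℓ`: load of machine `i` after the first `ℓ` jobs under schedule `σ`. -/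
def mload (p : Fin 2 → ℕ → ℝ) (σ : ℕ → Fin 2) (i : Fin 2) (ℓ : ℕ) : ℝ :=
  ∑ j ∈ Finset.Icc 1 ℓ, if σ j = i then p i j else 0

/-- `Evec p σ j i i'`: the load vector `D(j-1)` with `p i j` added to coordinate `i`,
evaluated at coordinate `i'`. -/
def Evec (p : Fin 2 → ℕ → ℝ) (σ : ℕ → Fin 2) (j : ℕ) (i i' : Fin 2) : ℝ :=
  mload p σ i' (j - 1) + if i' = i then p i j else 0

/-- Anticipated cost of job `j` for choosing machine `i`, given predicted responses `r`. -/
def acost (p : Fin 2 → ℕ → ℝ) (σ : ℕ → Fin 2) (r : ℕ → Fin 2 → Fin 2) (j : ℕ) (i : Fin 2) :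
    ℝ :=
  Evec p σ j i i + if r j i = i then p i (j + 1) else 0

/-- `σ` is a 1-lookahead equilibrium for jobs `1, …, n` on two machines:
there are predicted responses `r j i` (an argmin of the follower's cost), each job
`j < n` minimizes its anticipated cost, and the last job `n` minimizes its actual cost. -/
def OneLookEq (n : ℕ) (p : Fin 2 → ℕ → ℝ) (σ : ℕ → Fin 2) : Prop :=
  ∃ r : ℕ → Fin 2 → Fin 2,
    (∀ j, 1 ≤ j → j < n →
      (∀ i i' : Fin 2,
        Evec p σ j i (r j i) + p (r j i) (j + 1) ≤ Evec p σ j i i' + p i' (j + 1)) ∧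
      (∀ i : Fin 2, acost p σ r j (σ j) ≤ acost p σ r j i)) ∧
    (1 ≤ n → ∀ i : Fin 2, mload p σ (σ n) (n - 1) + p (σ n) n ≤ mload p σ i (n - 1) + p i n)


/-- Makespan of an arbitrary schedule `τ` of jobs `1, …, n` on two machines. -/
def makespan2 (n : ℕ) (p : Fin 2 → ℕ → ℝ) (τ : ℕ → Fin 2) : ℝ :=
  max (mload p τ 0 n) (mload p τ 1 n)

/-- Optimal (minimum) makespan over all schedules. -/
noncomputable def OPT2 (n : ℕ) (p : Fin 2 → ℕ → ℝ) : ℝ :=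
  sInf {x | ∃ τ : ℕ → Fin 2, x = makespan2 n p τ}

/-!
Write `S ℓ = p₁ + ⋯ + p_ℓ` for the sum of the minimum processing times. By induction on `ℓ`, as
long as job `ℓ + 1` exists, every load after the first `ℓ` jobs is at most `S (ℓ + 1)`, and some
machine `k` could still take job `ℓ + 1` within that bound. For the step, job `ℓ + 1` can secure
anticipated cost at most `S (ℓ + 2)` by going to `k`, whatever its follower predicts; with only two
machines, minimising the anticipated cost then bounds both the new loads and the follower's best
response by `S (ℓ + 2)`. The last job is myopic, so the makespan is at most `S n`, while every
schedule has total load at least `S n`, so makespan at least `S n / 2`.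
-/

namespace TwoMachines

-- One decision of job `j`: `d = D(j - 1)`, `a = p_{·,j}`, `b = p_{·,j+1}` and `r = r_j`. Then
-- `loadAfter d a i` is `E^i`, `followerCost d a b r i` is the cost of the predicted response
-- `r_j(i)`, and `anticipatedCost d a b r i` is `c_j(i)`.
def loadAfter (d a : Fin 2 → ℝ) (i i' : Fin 2) : ℝ :=
  d i' + if i' = i then a i else 0

def followerCost (d a b : Fin 2 → ℝ) (r : Fin 2 → Fin 2) (i : Fin 2) : ℝ :=
  loadAfter d a i (r i) + b (r i)

def anticipatedCost (d a b : Fin 2 → ℝ) (r : Fin 2 → Fin 2) (i : Fin 2) : ℝ :=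
  loadAfter d a i i + if r i = i then b i else 0

variable {d a b : Fin 2 → ℝ} {r : Fin 2 → Fin 2} {T : ℝ} {i i' k s : Fin 2}

lemma loadAfter_self : loadAfter d a i i = d i + a i := by
  simp [loadAfter]

lemma loadAfter_of_ne (h : i' ≠ i) : loadAfter d a i i' = d i' := by
  simp [loadAfter, h]

lemma loadAfter_le (hd : ∀ i, d i ≤ T) (hs : d s + a s ≤ T) (i : Fin 2) :
    loadAfter d a s i ≤ T := by
  by_cases h : i = s
  · rwa [h, loadAfter_self]
  · rw [loadAfter_of_ne h]
    exact hd i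

lemma anticipatedCost_of_eq (h : r i = i) :
    anticipatedCost d a b r i = followerCost d a b r i := by
  simp [anticipatedCost, followerCost, h]

lemma anticipatedCost_of_ne (h : r i ≠ i) : anticipatedCost d a b r i = d i + a i := by
  simp [anticipatedCost, h, loadAfter_self]

lemma add_le_anticipatedCost (hb : ∀ i, 0 ≤ b i) : d i + a i ≤ anticipatedCost d a b r i := by
  by_cases h : r i = i
  · simpa [anticipatedCost, h, loadAfter_self] using hb i
  · rw [anticipatedCost_of_ne h]

section BestResponse

variable (hr : ∀ i i', followerCost d a b r i ≤ loadAfter d a i i' + b i')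
include hr

lemma followerCost_le (hd : ∀ i, d i ≤ T) (hs : d s + a s ≤ T) (m : Fin 2) :
    followerCost d a b r s ≤ T + b m :=
  (hr s m).trans (add_le_add_left (loadAfter_le hd hs m) _)

lemma anticipatedCost_le (hb : ∀ i, 0 ≤ b i) (hd : ∀ i, d i ≤ T) (hk : d k + a k ≤ T)
    (m : Fin 2) : anticipatedCost d a b r k ≤ T + b m := by
  by_cases hrk : r k = k
  · rw [anticipatedCost_of_eq hrk]
    exact followerCost_le hr hd hk m
  · rw [anticipatedCost_of_ne hrk]
    linarith [hb m]

variable (hb : ∀ i, 0 ≤ b i) (hd : ∀ i, d i ≤ T) (hk : d k + a k ≤ T)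
  (hs : ∀ i, anticipatedCost d a b r s ≤ anticipatedCost d a b r i)
include hb hd hk hs

theorem loadAfter_le_of_minimizes (m : Fin 2) (i : Fin 2) : loadAfter d a s i ≤ T + b m := by
  have hs' := (add_le_anticipatedCost hb).trans ((hs k).trans (anticipatedCost_le hr hb hd hk m))
  exact loadAfter_le (fun i => (hd i).trans (le_add_of_nonneg_right (hb m))) hs' i

theorem followerCost_le_of_minimizes (ha : ∀ i, 0 ≤ a i) (m : Fin 2) :
    followerCost d a b r s ≤ T + b m := by
  have hks := (hs k).trans (anticipatedCost_le hr hb hd hk m)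
  by_cases hrs : r s = s
  · rwa [anticipatedCost_of_eq hrs] at hks
  by_cases hsT : d s + a s ≤ T
  · exact followerCost_le hr hd hsT m
  -- Otherwise `s ≠ k`, the follower of `s` goes to `k`, and `k` expected its follower to stay.
  have hsk : s ≠ k := fun h => hsT (h ▸ hk)
  have hrsk : r s = k := by omega
  have hrk : r k = k := by
    by_contra hrk
    have hsk' := hs k
    rw [anticipatedCost_of_ne hrs, anticipatedCost_of_ne hrk] at hsk'
    exact hsT (hsk'.trans hk)
  calc followerCost d a b r s = d k + b k := by
        rw [followerCost, hrsk, loadAfter_of_ne (Ne.symm hsk)]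
    _ ≤ followerCost d a b r k := by
        rw [followerCost, hrk, loadAfter_self]
        linarith [ha k]
    _ = anticipatedCost d a b r k := (anticipatedCost_of_eq hrk).symm
    _ ≤ T + b m := anticipatedCost_le hr hb hd hk m

end BestResponse

end TwoMachines

open TwoMachines

def sumMinTime (p : Fin 2 → ℕ → ℝ) (ℓ : ℕ) : ℝ :=
  ∑ j ∈ Finset.Icc 1 ℓ, min (p 0 j) (p 1 j)

section Game

variable {n : ℕ} {p : Fin 2 → ℕ → ℝ} {σ : ℕ → Fin 2}

lemma mload_zero (i : Fin 2) : mload p σ i 0 = 0 := by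
  simp [mload]

lemma mload_succ (ℓ : ℕ) (i : Fin 2) :
    mload p σ i (ℓ + 1) =
      loadAfter (fun i => mload p σ i ℓ) (fun i => p i (ℓ + 1)) (σ (ℓ + 1)) i := by
  rw [mload, Finset.sum_Icc_succ_top (by omega), ← mload, loadAfter]
  by_cases h : σ (ℓ + 1) = i
  · simp [h]
  · simp [h, Ne.symm h]

lemma Evec_succ (ℓ : ℕ) :
    Evec p σ (ℓ + 1) = loadAfter (fun i => mload p σ i ℓ) (fun i => p i (ℓ + 1)) := by
  funext i i'
  simp [Evec, loadAfter]

lemma exists_sumMinTime_succ (ℓ : ℕ) :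
    ∃ m, sumMinTime p (ℓ + 1) = sumMinTime p ℓ + p m (ℓ + 1) := by
  rw [sumMinTime, Finset.sum_Icc_succ_top (by omega), ← sumMinTime]
  rcases min_choice (p 0 (ℓ + 1)) (p 1 (ℓ + 1)) with h | h
  · exact ⟨0, by rw [h]⟩
  · exact ⟨1, by rw [h]⟩

lemma sumMinTime_zero : sumMinTime p 0 = 0 := by
  simp [sumMinTime]

theorem OneLookEq.mload_le (hp : ∀ i j, 0 ≤ p i j) (hσ : OneLookEq n p σ) :
    ∀ ℓ < n, (∀ i, mload p σ i ℓ ≤ sumMinTime p (ℓ + 1)) ∧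
      ∃ k, mload p σ k ℓ + p k (ℓ + 1) ≤ sumMinTime p (ℓ + 1) := by
  obtain ⟨r, hr, -⟩ := hσ
  intro ℓ
  induction ℓ with
  | zero =>
    intro _
    obtain ⟨m, hm⟩ := exists_sumMinTime_succ (p := p) 0
    rw [hm, sumMinTime_zero, zero_add]
    exact ⟨fun _ => by rw [mload_zero]; exact hp m 1, m, by rw [mload_zero, zero_add]⟩
  | succ ℓ ih =>
    intro hℓ
    obtain ⟨hd, k, hk⟩ := ih (by omega)
    obtain ⟨hresp, hchoice⟩ := hr (ℓ + 1) (by omega) hℓ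
    rw [Evec_succ] at hresp
    simp only [acost, Evec_succ] at hchoice
    obtain ⟨m, hm⟩ := exists_sumMinTime_succ (p := p) (ℓ + 1)
    rw [hm]
    refine ⟨fun i => ?_, r (ℓ + 1) (σ (ℓ + 1)), ?_⟩
    · rw [mload_succ]
      exact loadAfter_le_of_minimizes (b := fun i => p i (ℓ + 1 + 1)) hresp
        (fun _ => hp _ _) hd hk hchoice m i
    · rw [mload_succ]
      exact followerCost_le_of_minimizes (b := fun i => p i (ℓ + 1 + 1)) hresp
        (fun _ => hp _ _) hd hk hchoice (fun _ => hp _ _) m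

theorem OneLookEq.makespan2_le (hp : ∀ i j, 0 ≤ p i j) (hσ : OneLookEq n p σ) :
    makespan2 n p σ ≤ sumMinTime p n := by
  rcases Nat.eq_zero_or_pos n with rfl | hn
  · simp [makespan2, mload_zero, sumMinTime_zero]
  obtain ⟨ℓ, rfl⟩ : ∃ ℓ, n = ℓ + 1 := ⟨n - 1, by omega⟩
  obtain ⟨hd, k, hk⟩ := hσ.mload_le hp ℓ (by omega)
  obtain ⟨-, -, hlast⟩ := hσ
  have hlast := hlast (by omega)
  simp only [Nat.add_sub_cancel] at hlast
  have hload (i : Fin 2) : mload p σ i (ℓ + 1) ≤ sumMinTime p (ℓ + 1) := by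
    rw [mload_succ]
    exact loadAfter_le hd ((hlast k).trans hk) i
  exact max_le (hload 0) (hload 1)

lemma sumMinTime_le_two_mul_makespan2 (n : ℕ) (τ : ℕ → Fin 2) :
    sumMinTime p n ≤ 2 * makespan2 n p τ := by
  have hsum : sumMinTime p n ≤ mload p τ 0 n + mload p τ 1 n := by
    rw [sumMinTime, mload, mload, ← Finset.sum_add_distrib]
    refine Finset.sum_le_sum fun j _ => ?_
    rcases (by omega : τ j = 0 ∨ τ j = 1) with h | h <;> simp [h]
  have h0 : mload p τ 0 n ≤ makespan2 n p τ := le_max_left _ _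
  have h1 : mload p τ 1 n ≤ makespan2 n p τ := le_max_right _ _
  linarith

end Game

/-- For `m = 2`, every 1-lookahead equilibrium has makespan at most
`2 · OPT`: the sequential price of anarchy for 1-lookahead players on two unrelated
machines is at most `2`. -/
theorem spoa_oneLookahead_two_machines_le_two
    (n : ℕ) (p : Fin 2 → ℕ → ℝ) (hp : ∀ i j, 0 ≤ p i j)
    (σ : ℕ → Fin 2) (hσ : OneLookEq n p σ) :
    makespan2 n p σ ≤ 2 * OPT2 n p := by
  have hopt : sumMinTime p n / 2 ≤ OPT2 n p := by
    refine le_csInf ⟨_, σ, rfl⟩ ?_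
    rintro _ ⟨τ, rfl⟩
    linarith [sumMinTime_le_two_mul_makespan2 (p := p) n τ]
  linarith [hσ.makespan2_le hp]
end

section
/- In the sequential scheduling game on m unrelated machines where players have k-lookahead, ΔL([1:n]) ≤ Σ_{j=1}^n p_j + Σ_{j=1}^n ΔL(K_j); that is, the maximum possible increase of the makespan caused by all n jobs (over all initial loads and all k-lookahead plays) is at most the total minimum processing time of all jobs plus the sum over all jobs j of the maximum makespan increase caused by the lookahead set K_j playing alone. -/
/-!
Sequential scheduling game on `m` unrelated machines with `k`-lookahead players.
Machines are indexed by `Fin m`, jobs by natural numbers (a block `[a:b]` of jobs plays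
in the order `a, a+1, …, b`), and `p i j` is the processing time of job `j` on machine `i`.
-/

/-- Add the processing time of job `j` on machine `i` to the load vector `D`. -/
def bump {m : ℕ} (p : Fin m → ℕ → ℝ) (D : Fin m → ℝ) (i : Fin m) (j : ℕ) : Fin m → ℝ :=
  fun i' => D i' + if i' = i then p i j else 0

/-- `Out p D js F`: `F` is the final load vector of some backward-induction
(subgame-perfect, ties broken arbitrarily) play of the finite extensive game in which
the jobs in `js` choose machines in order, starting from loads `D`; the payoff of each
job is the load, after all of these moves, of the machine it chose. -/
inductive Out {m : ℕ} (p : Fin m → ℕ → ℝ) : (Fin m → ℝ) → List ℕ → (Fin m → ℝ) → Prop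
  | nil (D : Fin m → ℝ) : Out p D [] D
  | cons (D : Fin m → ℝ) (j : ℕ) (js : List ℕ) (i : Fin m) (cont : Fin m → Fin m → ℝ)
      (hcont : ∀ i', Out p (bump p D i' j) js (cont i'))
      (hopt : ∀ i', cont i i ≤ cont i' i') :
      Out p D (j :: js) (cont i)

/-- `i` is an optimal root move, for the root job `j` followed by the jobs `js`,
of the lookahead game starting from loads `D`, solved by backward induction
(ties broken arbitrarily). -/
def RootMove {m : ℕ} (p : Fin m → ℕ → ℝ) (D : Fin m → ℝ) (j : ℕ) (js : List ℕ)
    (i : Fin m) : Prop :=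
  ∃ cont : Fin m → Fin m → ℝ,
    (∀ i', Out p (bump p D i' j) js (cont i')) ∧ (∀ i', cont i i ≤ cont i' i')

/-- `Play p k D a b F`: starting from initial loads `D`, the block `[a:b]` of jobs plays a
`k`-lookahead play resulting in final loads `F`: the first remaining job `a` makes an
optimal root move of the lookahead game on jobs `a, a+1, …, min (a+k) b`, its processing
time is added to the chosen machine, and the remaining jobs continue. -/
inductive Play {m : ℕ} (p : Fin m → ℕ → ℝ) (k : ℕ) :
    (Fin m → ℝ) → ℕ → ℕ → (Fin m → ℝ) → Prop
  | nil (D : Fin m → ℝ) (a b : ℕ) (h : b < a) : Play p k D a b D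
  | cons (D : Fin m → ℝ) (a b : ℕ) (i : Fin m) (F : Fin m → ℝ) (hab : a ≤ b)
      (hroot : RootMove p D a (List.range' (a + 1) (min (a + k) b - a)) i)
      (hplay : Play p k (bump p D i a) (a + 1) b F) :
      Play p k D a b F

/-- Maximum load of a load vector. -/
noncomputable def maxLoad {m : ℕ} (D : Fin m → ℝ) : ℝ := ⨆ i, D i

/-- `ΔL([a:b])`: the maximum possible increase of the makespan caused by the block
`[a:b]` of jobs, over all nonnegative initial loads and all `k`-lookahead plays. -/
noncomputable def deltaL {m : ℕ} (p : Fin m → ℕ → ℝ) (k a b : ℕ) : ℝ :=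
  sSup {x | ∃ D F : Fin m → ℝ,
    (∀ i, 0 ≤ D i) ∧ Play p k D a b F ∧ x = maxLoad F - maxLoad D}

/-- Minimum processing time of job `j`. -/
noncomputable def pmin {m : ℕ} (p : Fin m → ℕ → ℝ) (j : ℕ) : ℝ := ⨅ i, p i j

/-!
When job `a` moves, every machine other than its choice `i` keeps its load. Machine `i` ends
the lookahead game (after `K_a` has played) at least at `D i + p i a`, and by optimality at
most where the root job would have ended on its fastest machine `i'`. That game, started from
`D` with `p_a` added on `i'`, is itself a `k`-lookahead play of `K_a` (the block fits in one
window), so it raises the makespan by at most `ΔL(K_a)`. Hence each job raises the makespan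
by at most `p_a + ΔL(K_a)`, and these increments telescope along the play.
-/

open Finset

variable {m : ℕ} {p : Fin m → ℕ → ℝ}

theorem le_maxLoad (D : Fin m → ℝ) (i : Fin m) : D i ≤ maxLoad D :=
  le_ciSup (Finite.bddAbove_range D) i

theorem maxLoad_mono {D F : Fin m → ℝ} (h : D ≤ F) : maxLoad D ≤ maxLoad F :=
  ciSup_mono (Finite.bddAbove_range F) h

@[simp]
theorem bump_self (D : Fin m → ℝ) (i : Fin m) (j : ℕ) : bump p D i j i = D i + p i j := by
  simp [bump]

@[simp]
theorem bump_of_ne (D : Fin m → ℝ) {i i' : Fin m} (j : ℕ) (h : i' ≠ i) :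
    bump p D i j i' = D i' := by
  simp [bump, h]

theorem le_bump (hp : ∀ i j, 0 ≤ p i j) (D : Fin m → ℝ) (i : Fin m) (j : ℕ) :
    D ≤ bump p D i j := fun i' => by
  unfold bump
  split_ifs <;> simp [hp]

theorem maxLoad_bump_le_of_le {D : Fin m → ℝ} {i : Fin m} {j : ℕ} {c : ℝ}
    (hD : maxLoad D ≤ c) (hi : D i + p i j ≤ c) : maxLoad (bump p D i j) ≤ c := by
  have : Nonempty (Fin m) := ⟨i⟩
  refine ciSup_le fun i' => ?_
  rcases eq_or_ne i' i with rfl | hne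
  · simpa using hi
  · simpa [hne] using (le_maxLoad D i').trans hD

theorem Out.le (hp : ∀ i j, 0 ≤ p i j) {D F : Fin m → ℝ} {js : List ℕ} (h : Out p D js F) :
    D ≤ F := by
  induction h with
  | nil => exact le_rfl
  | cons D j _ i _ _ _ ih => exact (le_bump hp D i j).trans (ih i)

section Play

variable {k : ℕ}

theorem Play.le (hp : ∀ i j, 0 ≤ p i j) {D F : Fin m → ℝ} {a b : ℕ} (h : Play p k D a b F) :
    D ≤ F := by
  induction h with
  | nil => exact le_rfl
  | cons D a _ i _ _ _ _ ih => exact (le_bump hp D i a).trans ih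

/-- Within one lookahead window, each later job's own lookahead game is the tail of the game
of job `a`. -/
theorem Play.of_out {a b : ℕ} {D F : Fin m → ℝ} (hb : b ≤ a + k)
    (h : Out p D (List.range' a (b + 1 - a)) F) : Play p k D a b F := by
  induction hL : b + 1 - a generalizing a D F with
  | zero =>
    rw [hL] at h
    cases h
    exact Play.nil D a b (by omega)
  | succ L ih =>
    rw [hL, List.range'_succ] at h
    cases h with
    | cons _ _ _ i cont hcont hopt =>
      have hwindow : min (a + k) b - a = L := by omega
      have hrest : b + 1 - (a + 1) = L := by omega
      exact Play.cons D a b i (cont i) (by omega) ⟨cont, hwindow ▸ hcont, hopt⟩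
        (ih (by omega) (hrest ▸ hcont i) hrest)

theorem Play.maxLoad_sub_le_sum (hp : ∀ i j, 0 ≤ p i j) {f : ℕ → ℝ} {b : ℕ}
    (hstep : ∀ (D : Fin m → ℝ) (i : Fin m) (a : ℕ), (∀ i, 0 ≤ D i) →
      RootMove p D a (List.range' (a + 1) (min (a + k) b - a)) i →
      maxLoad (bump p D i a) - maxLoad D ≤ f a)
    {a : ℕ} {D F : Fin m → ℝ} (h : Play p k D a b F) (hD : ∀ i, 0 ≤ D i) :
    maxLoad F - maxLoad D ≤ ∑ j ∈ Icc a b, f j := by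
  induction h with
  | nil D a b hba => simp [Icc_eq_empty_of_lt hba]
  | cons D a b i F hab hroot _ ih =>
    have hrest := ih hstep fun i' => (hD i').trans (le_bump hp D i a i')
    have hfirst := hstep D i a hD hroot
    rw [← add_sum_Ioc_eq_sum_Icc hab, ← Icc_add_one_left_eq_Ioc]
    linarith

theorem deltaL_bddAbove (hp : ∀ i j, 0 ≤ p i j) (a b : ℕ) :
    BddAbove {x | ∃ D F : Fin m → ℝ,
      (∀ i, 0 ≤ D i) ∧ Play p k D a b F ∧ x = maxLoad F - maxLoad D} := by
  refine ⟨∑ j ∈ Icc a b, ∑ i, p i j, ?_⟩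
  rintro _ ⟨D, F, hD, hplay, rfl⟩
  refine hplay.maxLoad_sub_le_sum hp (fun D i a _ _ => ?_) hD
  have hsum : p i a ≤ ∑ i', p i' a := single_le_sum (fun i' _ => hp i' a) (mem_univ i)
  have hsum_nonneg : 0 ≤ ∑ i', p i' a := sum_nonneg fun i' _ => hp i' a
  have := maxLoad_bump_le_of_le (p := p) (j := a) (c := maxLoad D + ∑ i', p i' a)
    (by linarith) (by linarith [le_maxLoad D i])
  linarith

theorem Play.maxLoad_sub_le_deltaL (hp : ∀ i j, 0 ≤ p i j) {a b : ℕ} {D F : Fin m → ℝ}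
    (h : Play p k D a b F) (hD : ∀ i, 0 ≤ D i) :
    maxLoad F - maxLoad D ≤ deltaL p k a b :=
  le_csSup (deltaL_bddAbove hp a b) ⟨D, F, hD, h, rfl⟩

theorem deltaL_nonneg (hp : ∀ i j, 0 ≤ p i j) (a b : ℕ) : 0 ≤ deltaL p k a b :=
  Real.sSup_nonneg <| by
    rintro _ ⟨D, F, -, hplay, rfl⟩
    exact sub_nonneg.2 (maxLoad_mono (hplay.le hp))

end Play

theorem pmin_nonneg (hp : ∀ i j, 0 ≤ p i j) (j : ℕ) : 0 ≤ pmin p j :=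
  Real.iInf_nonneg fun i => hp i j

theorem RootMove.maxLoad_bump_le (hp : ∀ i j, 0 ≤ p i j) {k a b : ℕ} {D : Fin m → ℝ}
    {i : Fin m} (hD : ∀ i, 0 ≤ D i)
    (hroot : RootMove p D a (List.range' (a + 1) (min (a + k) b - a)) i) :
    maxLoad (bump p D i a) ≤ maxLoad D + pmin p a + deltaL p k (a + 1) (min (a + k) b) := by
  obtain ⟨cont, hcont, hopt⟩ := hroot
  have : Nonempty (Fin m) := ⟨i⟩
  obtain ⟨i', hi'⟩ : ∃ i', p i' a = pmin p a := exists_eq_ciInf_of_finite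
  have hlookahead : Play p k (bump p D i' a) (a + 1) (min (a + k) b) (cont i') :=
    Play.of_out (by omega) (by rw [Nat.add_sub_add_right]; exact hcont i')
  have hincrease := hlookahead.maxLoad_sub_le_deltaL hp fun i'' =>
    (hD i'').trans (le_bump hp D i' a i'')
  have hfastest : maxLoad (bump p D i' a) ≤ maxLoad D + pmin p a :=
    maxLoad_bump_le_of_le (by linarith [pmin_nonneg hp a]) (by linarith [le_maxLoad D i'])
  have hdelta := deltaL_nonneg (k := k) hp (a + 1) (min (a + k) b)
  refine maxLoad_bump_le_of_le (by linarith [pmin_nonneg hp a]) ?_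
  calc D i + p i a = bump p D i a i := (bump_self D i a).symm
    _ ≤ cont i i := (hcont i).le hp i
    _ ≤ cont i' i' := hopt i'
    _ ≤ maxLoad (cont i') := le_maxLoad _ i'
    _ ≤ _ := by linarith

theorem deltaL_le_sum_pmin_add_sum_deltaL_general (m k n : ℕ)
    (p : Fin m → ℕ → ℝ) (hp : ∀ i j, 0 ≤ p i j) :
    deltaL p k 1 n ≤
      (∑ j ∈ Finset.Icc 1 n, pmin p j) +
        ∑ j ∈ Finset.Icc 1 n, deltaL p k (j + 1) (min (j + k) n) := by
  refine Real.sSup_le ?_ (add_nonneg (sum_nonneg fun j _ => pmin_nonneg hp j)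
    (sum_nonneg fun j _ => deltaL_nonneg hp _ _))
  rintro _ ⟨D, F, hD, hplay, rfl⟩
  rw [← sum_add_distrib]
  refine hplay.maxLoad_sub_le_sum hp (fun D i a hD hroot => ?_) hD
  linarith [hroot.maxLoad_bump_le hp hD]

/-- For jobs `1, …, n` with `k`-lookahead,
`ΔL([1:n]) ≤ Σ_{j=1}^n p_j + Σ_{j=1}^n ΔL(K_j)`, where `K_j = [j+1 : min (j+k) n]`
is the lookahead set of job `j` and `p_j` its minimum processing time. -/
theorem deltaL_le_sum_pmin_add_sum_deltaL (m k n : ℕ) (hm : 0 < m)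
    (p : Fin m → ℕ → ℝ) (hp : ∀ i j, 0 ≤ p i j) :
    deltaL p k 1 n ≤
      (∑ j ∈ Finset.Icc 1 n, pmin p j) +
        ∑ j ∈ Finset.Icc 1 n, deltaL p k (j + 1) (min (j + k) n) :=
  deltaL_le_sum_pmin_add_sum_deltaL_general m k n p hp
end

section
/- Let m = 2 and let σ be a 1-lookahead equilibrium of a generic instance, meaning that in every comparison of anticipated costs made by any player (both the comparisons defining predicted responses and those defining the players' own choices) the two compared quantities are never equal. If for some job v it holds that D_1(v−1) + p_{1,v} < D_2(v−1) + p_{2,v}, then there exists a job v' with v ≤ v' ≤ n such that σ_{v'} = 1. (Symmetrically, if D_2(v−1) + p_{2,v} < D_1(v−1) + p_{1,v}, then some job v' ∈ {v,…,n} has σ_{v'} = 2.) -/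
/-!
Suppose job `v` myopically prefers machine `a` to machine `b`, i.e. `D_a(v-1) + p_{a,v}` is
smaller, yet all of the jobs `v, …, n` choose `b`. This myopic preference then propagates to job
`v + 1`: if job `v` predicted that its follower would also choose `b`, then comparing its two
anticipated costs (strict by genericity) forces `p_{b,v} < 0` or `p_{b,v+1} < 0`; so it predicted
the follower would choose `a`, and once job `v` really is on `b` that prediction is exactly the
follower's myopic comparison. Hence the last job `n` also prefers `a`, and cannot choose `b`.
-/

section

variable {p : Fin 2 → ℕ → ℝ} {σ : ℕ → Fin 2} {r : ℕ → Fin 2 → Fin 2} {n j : ℕ} {a b i i' : Fin 2}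

/-- The cost `D_i(j-1) + p_{i,j}` that job `j` incurs on machine `i`. -/
def myopicCost (p : Fin 2 → ℕ → ℝ) (σ : ℕ → Fin 2) (j : ℕ) (i : Fin 2) : ℝ :=
  mload p σ i (j - 1) + p i j

lemma mload_of_pos (hj : 1 ≤ j) :
    mload p σ i j = mload p σ i (j - 1) + if σ j = i then p i j else 0 := by
  obtain ⟨k, rfl⟩ : ∃ k, j = k + 1 := ⟨j - 1, by omega⟩
  exact Finset.sum_Icc_succ_top (by omega) _

lemma Evec_self : Evec p σ j i i = myopicCost p σ j i := by
  simp [Evec, myopicCost]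

lemma Evec_of_ne (h : i' ≠ i) : Evec p σ j i i' = mload p σ i' (j - 1) := by
  simp [Evec, h]

lemma Evec_add_eq_myopicCost_succ (hj : 1 ≤ j) (hσ : σ j = i) :
    Evec p σ j i i' + p i' (j + 1) = myopicCost p σ (j + 1) i' := by
  rw [Evec, myopicCost, Nat.add_sub_cancel, mload_of_pos hj, hσ]
  by_cases h : i' = i
  · subst h
    simp
  · simp [h, Ne.symm h]

lemma acost_of_response_eq (h : r j i = i) :
    acost p σ r j i = myopicCost p σ j i + p i (j + 1) := by
  simp [acost, h, Evec_self]

lemma acost_of_response_ne (h : r j i ≠ i) : acost p σ r j i = myopicCost p σ j i := by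
  simp [acost, h, Evec_self]

lemma response_eq_of_acost_lt (hab : a ≠ b) (hpj : 0 ≤ p b j) (hpj' : 0 ≤ p b (j + 1))
    (hra : Evec p σ j a (r j a) + p (r j a) (j + 1) ≤ Evec p σ j a b + p b (j + 1))
    (hacost : acost p σ r j b < acost p σ r j a)
    (hpref : myopicCost p σ j a < myopicCost p σ j b) : r j b = a := by
  by_contra hrb
  have hb : acost p σ r j b = myopicCost p σ j b + p b (j + 1) :=
    acost_of_response_eq (by omega)
  by_cases hra_eq : r j a = a
  · rw [hra_eq, Evec_self, Evec_of_ne hab.symm] at hra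
    rw [acost_of_response_eq hra_eq] at hacost
    unfold myopicCost at *
    linarith
  · rw [acost_of_response_ne hra_eq] at hacost
    linarith

lemma myopicCost_succ_lt (hab : a ≠ b) (hp : ∀ i j, 0 ≤ p i j) (hj : 1 ≤ j)
    (hr : ∀ i i' : Fin 2,
      Evec p σ j i (r j i) + p (r j i) (j + 1) ≤ Evec p σ j i i' + p i' (j + 1))
    (hc : ∀ i : Fin 2, acost p σ r j (σ j) ≤ acost p σ r j i)
    (hgen1 : Evec p σ j b a + p a (j + 1) ≠ Evec p σ j b b + p b (j + 1))
    (hgen2 : acost p σ r j a ≠ acost p σ r j b)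
    (hσ : σ j = b) (hpref : myopicCost p σ j a < myopicCost p σ j b) :
    myopicCost p σ (j + 1) a < myopicCost p σ (j + 1) b := by
  have hacost : acost p σ r j b < acost p σ r j a := hσ ▸ (hc a).lt_of_ne (hσ ▸ hgen2.symm)
  have hrb : r j b = a :=
    response_eq_of_acost_lt hab (hp b j) (hp b (j + 1)) (hr a b) hacost hpref
  have hpredict := hr b b
  rw [hrb] at hpredict
  rw [← Evec_add_eq_myopicCost_succ hj hσ, ← Evec_add_eq_myopicCost_succ hj hσ]
  exact hpredict.lt_of_ne hgen1

lemma exists_choice_of_myopicCost_lt (hab : a ≠ b) (hp : ∀ i j, 0 ≤ p i j)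
    (hr : ∀ j, 1 ≤ j → j < n → ∀ i i' : Fin 2,
      Evec p σ j i (r j i) + p (r j i) (j + 1) ≤ Evec p σ j i i' + p i' (j + 1))
    (hc : ∀ j, 1 ≤ j → j < n → ∀ i : Fin 2, acost p σ r j (σ j) ≤ acost p σ r j i)
    (hlast : 1 ≤ n → ∀ i : Fin 2,
      mload p σ (σ n) (n - 1) + p (σ n) n ≤ mload p σ i (n - 1) + p i n)
    (hgen1 : ∀ j, 1 ≤ j → j < n → ∀ i : Fin 2,
      Evec p σ j i a + p a (j + 1) ≠ Evec p σ j i b + p b (j + 1))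
    (hgen2 : ∀ j, 1 ≤ j → j < n → acost p σ r j a ≠ acost p σ r j b)
    {v : ℕ} (hv1 : 1 ≤ v) (hv2 : v ≤ n) (hpref : myopicCost p σ v a < myopicCost p σ v b) :
    ∃ v', v ≤ v' ∧ v' ≤ n ∧ σ v' = a := by
  by_contra! hnone
  have hb : ∀ j, v ≤ j → j ≤ n → σ j = b := fun j hvj hjn ↦ by
    have := hnone j hvj hjn
    omega
  have hprefs : ∀ j, v ≤ j → j ≤ n → myopicCost p σ j a < myopicCost p σ j b := by
    intro j hvj
    induction j, hvj using Nat.le_induction with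
    | base => exact fun _ ↦ hpref
    | succ j hvj ih =>
      intro hjn
      exact myopicCost_succ_lt hab hp (by omega) (hr j (by omega) (by omega))
        (hc j (by omega) (by omega)) (hgen1 j (by omega) (by omega) b)
        (hgen2 j (by omega) (by omega)) (hb j hvj (by omega)) (ih (by omega))
  have hlast_a := hlast (by omega) a
  rw [hb n hv2 le_rfl] at hlast_a
  exact (hprefs n hv2 le_rfl).not_ge hlast_a

end

theorem exists_later_choice_of_generic_general
    (n : ℕ) (p : Fin 2 → ℕ → ℝ) (hp : ∀ i j, 0 ≤ p i j)
    (σ : ℕ → Fin 2) (r : ℕ → Fin 2 → Fin 2)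
    (hr : ∀ j, 1 ≤ j → j < n → ∀ i i' : Fin 2,
      Evec p σ j i (r j i) + p (r j i) (j + 1) ≤ Evec p σ j i i' + p i' (j + 1))
    (hc : ∀ j, 1 ≤ j → j < n → ∀ i : Fin 2, acost p σ r j (σ j) ≤ acost p σ r j i)
    (hlast : 1 ≤ n → ∀ i : Fin 2,
      mload p σ (σ n) (n - 1) + p (σ n) n ≤ mload p σ i (n - 1) + p i n)
    (hgen1 : ∀ j, 1 ≤ j → j < n → ∀ i : Fin 2,
      Evec p σ j i 0 + p 0 (j + 1) ≠ Evec p σ j i 1 + p 1 (j + 1))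
    (hgen2 : ∀ j, 1 ≤ j → j < n → acost p σ r j 0 ≠ acost p σ r j 1)
    (v : ℕ) (hv1 : 1 ≤ v) (hv2 : v ≤ n) :
    (mload p σ 0 (v - 1) + p 0 v < mload p σ 1 (v - 1) + p 1 v →
      ∃ v', v ≤ v' ∧ v' ≤ n ∧ σ v' = 0) ∧
    (mload p σ 1 (v - 1) + p 1 v < mload p σ 0 (v - 1) + p 0 v →
      ∃ v', v ≤ v' ∧ v' ≤ n ∧ σ v' = 1) :=
  ⟨exists_choice_of_myopicCost_lt (by decide) hp hr hc hlast hgen1 hgen2 hv1 hv2,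
    exists_choice_of_myopicCost_lt (by decide) hp hr hc hlast
      (fun j hj hjn i ↦ (hgen1 j hj hjn i).symm) (fun j hj hjn ↦ (hgen2 j hj hjn).symm) hv1 hv2⟩

/-- Let `σ` be a 1-lookahead equilibrium on two machines, witnessed by
the predicted-response function `r` (hypotheses `hr`, `hc`, `hlast`), of a *generic*
instance: in every comparison of anticipated costs made by any player (the comparisons
defining predicted responses, those defining each player's own choice, and the last
player's comparison) the two compared quantities are never equal (`hgen1`–`hgen3`).
If for some job `v`, `D₁(v−1) + p₁ᵥ < D₂(v−1) + p₂ᵥ` then some job `v' ∈ {v, …, n}`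
chooses machine 1; symmetrically with the machines interchanged.
(Machine 1 is index `0`, machine 2 is index `1`.) -/
theorem exists_later_choice_of_generic
    (n : ℕ) (p : Fin 2 → ℕ → ℝ) (hp : ∀ i j, 0 ≤ p i j)
    (σ : ℕ → Fin 2) (r : ℕ → Fin 2 → Fin 2)
    (hr : ∀ j, 1 ≤ j → j < n → ∀ i i' : Fin 2,
      Evec p σ j i (r j i) + p (r j i) (j + 1) ≤ Evec p σ j i i' + p i' (j + 1))
    (hc : ∀ j, 1 ≤ j → j < n → ∀ i : Fin 2, acost p σ r j (σ j) ≤ acost p σ r j i)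
    (hlast : 1 ≤ n → ∀ i : Fin 2,
      mload p σ (σ n) (n - 1) + p (σ n) n ≤ mload p σ i (n - 1) + p i n)
    (hgen1 : ∀ j, 1 ≤ j → j < n → ∀ i : Fin 2,
      Evec p σ j i 0 + p 0 (j + 1) ≠ Evec p σ j i 1 + p 1 (j + 1))
    (hgen2 : ∀ j, 1 ≤ j → j < n → acost p σ r j 0 ≠ acost p σ r j 1)
    (hgen3 : 1 ≤ n → mload p σ 0 (n - 1) + p 0 n ≠ mload p σ 1 (n - 1) + p 1 n)
    (v : ℕ) (hv1 : 1 ≤ v) (hv2 : v ≤ n) :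
    (mload p σ 0 (v - 1) + p 0 v < mload p σ 1 (v - 1) + p 1 v →
      ∃ v', v ≤ v' ∧ v' ≤ n ∧ σ v' = 0) ∧
    (mload p σ 1 (v - 1) + p 1 v < mload p σ 0 (v - 1) + p 0 v →
      ∃ v', v ≤ v' ∧ v' ≤ n ∧ σ v' = 1) :=
  exists_later_choice_of_generic_general n p hp σ r hr hc hlast hgen1 hgen2 v hv1 hv2
end
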